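/- Toy Example 1, hypocritical risk of the Bayes optimal classifier equals 1: for the Bayes classifier h of Toy Example 1 (predicting −1 on [2kε,(2k+1)ε) and +1 on ((2k+1)ε,(2k+2)ε]) under the ℓ∞/absolute-value threat model with radius ε, every example (x, y) with x in the interior of [0,1] can be perturbed within distance ε to a point classified as y, hence R_hyp(h, D) = 1 (and also R_adv(h, D) = 1). -/

import Mathlib

open MeasureTheory ProbabilityTheory Classical

/-- First-type intervals `[2kε, (2k+1)ε)` for `ε = 1/(2n)`, where `η = 1/4`. -/
def firstType (n : ℕ) (x : ℝ) : Prop :=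
  ∃ k : ℕ, k < n ∧ x ∈ Set.Ico ((2 * k) * (1 / (2 * n)) : ℝ) ((2 * k + 1) * (1 / (2 * n)))

/-- Toy distribution on `ℝ × {−1, +1} ⊆ ℝ × ℤ`: `x` is uniform on `[0,1]`, with
`P(y = +1 ∣ x) = 1/4` on first-type intervals and `P(y = +1 ∣ x) = 1` elsewhere
(in particular on the second-type intervals `((2k+1)ε, (2k+2)ε]`). -/
noncomputable def toyD (n : ℕ) : Measure (ℝ × ℤ) :=
  (volume.restrict (Set.Icc (0 : ℝ) 1)).bind fun x =>
    if firstType n x then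
      ENNReal.ofReal (1 / 4) • Measure.dirac (x, 1)
        + ENNReal.ofReal (3 / 4) • Measure.dirac (x, -1)
    else Measure.dirac (x, 1)

/-! Scaling by `2n`, the first-type intervals are exactly the points of `[0, 1)` whose scaled
integer part is even. Moving by `ε = 1/(2n)` shifts that integer part by one, so from every
`x ∈ [0, 1)` both a first-type point (label `-1`) and a point of the other type (label `1`) lie
within distance `ε`. Hence both integrands equal `1` on `[0, 1) × {-1, 1}`, which carries all the
mass of `toyD n`. -/

theorem MeasureTheory.Measure.ae_bind_of_ae_ae {α β : Type*} [MeasurableSpace α]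
    [MeasurableSpace β] {m : Measure α} {f : α → Measure β} {s : Set β} (hs : MeasurableSet s)
    (h : ∀ᵐ a ∂m, ∀ᵐ b ∂f a, b ∈ s) : ∀ᵐ b ∂m.bind f, b ∈ s := by
  have hnull : ∫⁻ a, f a sᶜ ∂m = 0 :=
    (lintegral_congr_ae (h.mono fun _ ha => ae_iff.1 ha)).trans lintegral_zero
  exact ae_iff.2 <| nonpos_iff_eq_zero.1 <| (Measure.bind_apply_le f hs.compl).trans_eq hnull

lemma biSup_ite_one_zero_eq_one {α : Type*} {s : Set α} {p : α → Prop} [DecidablePred p]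
    (h : ∃ x ∈ s, p x) :
    (⨆ x ∈ s, if p x then (1 : ℝ) else 0) = 1 := by
  obtain ⟨x, hxs, hpx⟩ := h
  have hle : ∀ y, (⨆ _ : y ∈ s, if p y then (1 : ℝ) else 0) ≤ 1 := fun y =>
    Real.iSup_le (fun _ => by split_ifs <;> norm_num) zero_le_one
  refine le_antisymm (Real.iSup_le hle zero_le_one) ?_
  refine le_ciSup_of_le ⟨1, Set.forall_mem_range.2 hle⟩ x ?_
  rw [ciSup_pos hxs, if_pos hpx]

lemma measurableSet_setOf_firstType (n : ℕ) : MeasurableSet {x | firstType n x} := by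
  unfold firstType
  measurability

lemma firstType_iff_even_floor {n : ℕ} (hn : 0 < n) {x : ℝ} (hx : 0 ≤ x) :
    firstType n x ↔ Even ⌊2 * n * x⌋₊ ∧ ⌊2 * n * x⌋₊ < 2 * n := by
  have h2n : (0 : ℝ) < 2 * n := by positivity
  have hmem : ∀ k : ℕ, x ∈ Set.Ico ((2 * k) * (1 / (2 * n)) : ℝ) ((2 * k + 1) * (1 / (2 * n)))
      ↔ ⌊2 * n * x⌋₊ = 2 * k := by
    intro k
    rw [Nat.floor_eq_iff (by positivity), Set.mem_Ico, ← div_eq_mul_one_div, ← div_eq_mul_one_div,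
      div_le_iff₀ h2n, lt_div_iff₀ h2n]
    push_cast
    constructor <;> rintro ⟨h₁, h₂⟩ <;> constructor <;> linarith
  simp only [firstType, hmem]
  constructor
  · rintro ⟨k, hk, hfloor⟩
    exact ⟨⟨k, by omega⟩, by omega⟩
  · rintro ⟨⟨k, hk⟩, hlt⟩
    exact ⟨k, by omega, by omega⟩

lemma exists_firstType_and_not_firstType_mem_closedBall {n : ℕ} (hn : 0 < n) {x : ℝ}
    (hx₀ : 0 ≤ x) (hx₁ : x < 1) :
    (∃ x' ∈ Metric.closedBall x (1 / (2 * n)), firstType n x') ∧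
      ∃ x' ∈ Metric.closedBall x (1 / (2 * n)), ¬ firstType n x' := by
  have h2n : (0 : ℝ) < 2 * n := by positivity
  have hε : (0 : ℝ) ≤ 1 / (2 * n) := by positivity
  have hlt : ⌊2 * n * x⌋₊ < 2 * n := by
    rw [Nat.floor_lt (by positivity)]; push_cast; nlinarith
  rcases Nat.even_or_odd ⌊2 * n * x⌋₊ with heven | ⟨k, hk⟩
  · refine ⟨⟨x, Metric.mem_closedBall_self hε, (firstType_iff_even_floor hn hx₀).2 ⟨heven, hlt⟩⟩,
      x + 1 / (2 * n), by simp, ?_⟩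
    rw [firstType_iff_even_floor hn (by positivity), mul_add, mul_one_div_cancel h2n.ne',
      Nat.floor_add_one (by positivity), Nat.even_add_one]
    exact fun h => h.1 heven
  · have h1 : (1 : ℝ) ≤ 2 * n * x := Nat.one_le_floor_iff _ |>.1 (by omega)
    have hsub : 0 ≤ x - 1 / (2 * n) := by
      rw [sub_nonneg, div_le_iff₀' h2n]; linarith
    refine ⟨⟨x - 1 / (2 * n), by simp, ?_⟩, x, Metric.mem_closedBall_self hε, ?_⟩
    · rw [firstType_iff_even_floor hn hsub, mul_sub, mul_one_div_cancel h2n.ne',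
        Nat.floor_sub_one, hk]
      exact ⟨⟨k, by omega⟩, by omega⟩
    · rw [firstType_iff_even_floor hn hx₀, hk]
      exact fun h => Nat.not_even_two_mul_add_one k h.1

noncomputable def toyLabelLaw (n : ℕ) (x : ℝ) : Measure (ℝ × ℤ) :=
  if firstType n x then
    ENNReal.ofReal (1 / 4) • Measure.dirac (x, 1) + ENNReal.ofReal (3 / 4) • Measure.dirac (x, -1)
  else Measure.dirac (x, 1)

lemma toyD_eq_bind (n : ℕ) : toyD n = (volume.restrict (Set.Icc 0 1)).bind (toyLabelLaw n) := rfl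

lemma measurable_toyLabelLaw (n : ℕ) : Measurable (toyLabelLaw n) := by
  have hdirac (c : ℤ) : Measurable fun x : ℝ => Measure.dirac ((x, c) : ℝ × ℤ) :=
    Measure.measurable_dirac.comp (measurable_id.prodMk measurable_const)
  refine Measurable.ite (measurableSet_setOf_firstType n) ?_ (hdirac 1)
  refine Measure.measurable_measure.2 fun s hs => ?_
  simp only [Measure.add_apply, Measure.smul_apply, smul_eq_mul]
  exact (((Measure.measurable_coe hs).comp (hdirac 1)).const_mul _).add
    (((Measure.measurable_coe hs).comp (hdirac (-1))).const_mul _)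

instance (n : ℕ) (x : ℝ) : IsProbabilityMeasure (toyLabelLaw n x) := by
  unfold toyLabelLaw
  split_ifs
  · constructor
    simp only [Measure.add_apply, Measure.smul_apply, measure_univ, smul_eq_mul, mul_one]
    rw [← ENNReal.ofReal_add (by norm_num) (by norm_num)]
    norm_num
  · infer_instance

instance (n : ℕ) : IsProbabilityMeasure (toyD n) := by
  constructor
  rw [toyD_eq_bind, Measure.bind_apply .univ (measurable_toyLabelLaw n).aemeasurable]
  simp [Real.volume_Icc]

lemma ae_toyLabelLaw (n : ℕ) (x : ℝ) :
    ∀ᵐ z ∂toyLabelLaw n x, z.1 = x ∧ (z.2 = -1 ∨ z.2 = 1) := by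
  unfold toyLabelLaw
  split_ifs <;> simp [ae_dirac_eq]

-- Half-open on the right: from `x = 1` no first-type point is within `ε`.
lemma ae_toyD (n : ℕ) : ∀ᵐ z ∂toyD n, z ∈ Set.Ico (0 : ℝ) 1 ×ˢ ({-1, 1} : Set ℤ) := by
  refine Measure.ae_bind_of_ae_ae (measurableSet_Ico.prod (Set.toFinite _).measurableSet) ?_
  rw [Measure.restrict_congr_set Ico_ae_eq_Icc.symm]
  filter_upwards [ae_restrict_mem measurableSet_Ico] with x hx
  filter_upwards [ae_toyLabelLaw n x] with z ⟨rfl, hz⟩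
  exact ⟨hx, hz⟩

/-- Toy Example 1: for the Bayes optimal classifier, both the hypocritical risk
and the adversarial risk equal `1` under the threat model `|x' − x| ≤ ε` with
`ε = 1/(2n)`. -/
theorem toy_bayes_hyp_and_adv_risk_one (n : ℕ) (hn : 0 < n)
    (h : ℝ → ℤ) (hh : ∀ x, h x = if firstType n x then -1 else 1) :
    (∫ z, (⨆ x' ∈ Metric.closedBall z.1 (1 / (2 * n) : ℝ),
        (if h x' = z.2 then (1 : ℝ) else 0)) ∂(toyD n)) = 1
    ∧ (∫ z, (⨆ x' ∈ Metric.closedBall z.1 (1 / (2 * n) : ℝ),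
        (if h x' ≠ z.2 then (1 : ℝ) else 0)) ∂(toyD n)) = 1 := by
  have hreach : ∀ᵐ z ∂toyD n,
      (∃ x' ∈ Metric.closedBall z.1 (1 / (2 * n) : ℝ), h x' = z.2) ∧
        ∃ x' ∈ Metric.closedBall z.1 (1 / (2 * n) : ℝ), h x' ≠ z.2 := by
    filter_upwards [ae_toyD n] with ⟨x, y⟩ ⟨hx, hy⟩
    obtain ⟨⟨x₁, hx₁, hfirst⟩, x₂, hx₂, hnot⟩ :=
      exists_firstType_and_not_firstType_mem_closedBall hn hx.1 hx.2
    have h₁ : h x₁ = -1 := by rw [hh, if_pos hfirst]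
    have h₂ : h x₂ = 1 := by rw [hh, if_neg hnot]
    rcases hy with rfl | rfl
    · exact ⟨⟨x₁, hx₁, h₁⟩, x₂, hx₂, by simp [h₂]⟩
    · exact ⟨⟨x₂, hx₂, h₂⟩, x₁, hx₁, by simp [h₁]⟩
  constructor
  · rw [integral_congr_ae (hreach.mono fun _ hz => biSup_ite_one_zero_eq_one hz.1)]
    simp
  · rw [integral_congr_ae (hreach.mono fun _ hz => biSup_ite_one_zero_eq_one hz.2)]
    simp
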